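/- (Theorem 3.4) For every n ≥ 0, d_n = ∑_{k=0}^{n} (−1)^{(n−k)/2} · d_{n,k} · s_k, where the summand is interpreted as 0 when n−k is odd (an identity of integers, or equivalently of rationals). -/
import Mathlib


/-- Value of a Dyck step: `true` is an up step (+1), `false` a down step (-1). -/
def stepVal (b : Bool) : ℤ := if b then 1 else -1

/-- Partial sum of the first `i` steps of the word `w`. -/
def psum {n : ℕ} (w : Fin n → Bool) (i : ℕ) : ℤ :=
  ∑ j : Fin n, if (j : ℕ) < i then stepVal (w j) else 0

/-- `d n`: number of symmetric Dyck paths of length `2n`, encoded by their left half,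
a word in `{+1,-1}^n` with all partial sums nonnegative. -/
noncomputable def d (n : ℕ) : ℕ := Set.ncard {w : Fin n → Bool | ∀ i ≤ n, 0 ≤ psum w i}

/-- Steps of a Schröder path: up `U`, down `D`, and the 2-horizontal step `H`. -/
inductive SStep | U | D | H
deriving DecidableEq

/-- Width of a Schröder step. -/
def SStep.width : SStep → ℕ
  | .U => 1 | .D => 1 | .H => 2

/-- Height increment of a Schröder step. -/
def SStep.height : SStep → ℤ
  | .U => 1 | .D => -1 | .H => 0

/-- `s n`: number of symmetric Schröder paths of length `2n`, encoded by their left half,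
a sequence of steps of total width `n` with all partial height sums nonnegative. -/
noncomputable def s (n : ℕ) : ℕ :=
  Set.ncard {l : List SStep | (l.map SStep.width).sum = n ∧
    ∀ i : ℕ, 0 ≤ ((l.take i).map SStep.height).sum}

/-- The ballot numbers `d_{n,k} = ((k+1)/(n+1)) * C(n+1, (n-k)/2)` when `k ≤ n` and
`n ≡ k (mod 2)`, and `0` otherwise. -/
def dnk (n k : ℕ) : ℕ :=
  if k ≤ n ∧ (n - k) % 2 = 0 then (k + 1) * Nat.choose (n + 1) ((n - k) / 2) / (n + 1)
  else 0


namespace Thm34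


def D : ℕ → ℕ → ℕ
  | 0, k => if k = 0 then 1 else 0
  | n+1, k => (if k = 0 then 0 else D n (k-1)) + D n (k+1)

def T : ℕ → ℕ → ℕ
  | 0, j => if j = 0 then 1 else 0
  | 1, j => if j = 1 then 1 else 0
  | k+2, j => (if j = 0 then 0 else T (k+1) (j-1)) + T (k+1) (j+1) + T k j

lemma D0 (k : ℕ) : D 0 k = if k = 0 then 1 else 0 := rfl
lemma Dsucc (n k : ℕ) : D (n+1) k = (if k = 0 then 0 else D n (k-1)) + D n (k+1) := rfl
lemma T0 (j : ℕ) : T 0 j = if j = 0 then 1 else 0 := rfl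
lemma T1 (j : ℕ) : T 1 j = if j = 1 then 1 else 0 := rfl
lemma Tsucc (k j : ℕ) : T (k+2) j =
    (if j = 0 then 0 else T (k+1) (j-1)) + T (k+1) (j+1) + T k j := rfl

lemma D_zero_of_lt : ∀ n k, n < k → D n k = 0 := by
  intro n
  induction n with
  | zero => intro k h; rw [D0, if_neg (by omega)]
  | succ n ih =>
    intro k h
    rw [Dsucc, ih (k+1) (by omega), if_neg (by omega), ih (k-1) (by omega)]

lemma D_zero_of_parity : ∀ n k, (n + k) % 2 = 1 → D n k = 0 := by
  intro n
  induction n with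
  | zero => intro k h; rw [D0, if_neg (by omega)]
  | succ n ih =>
    intro k h
    rw [Dsucc, ih (k+1) (by omega)]
    rcases Nat.eq_zero_or_pos k with h0 | h0
    · rw [if_pos h0]
    · rw [if_neg (by omega), ih (k-1) (by omega)]

lemma D_self : ∀ n, D n n = 1 := by
  intro n
  induction n with
  | zero => rw [D0, if_pos rfl]
  | succ n ih =>
    rw [Dsucc, if_neg (by omega), D_zero_of_lt n (n+2) (by omega),
      Nat.add_sub_cancel, ih]

lemma T_zero_of_lt : ∀ k j, k < j → T k j = 0 := by
  intro k
  induction k using Nat.strong_induction_on with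
  | _ k ih =>
    match k with
    | 0 => intro j h; rw [T0, if_neg (by omega)]
    | 1 => intro j h; rw [T1, if_neg (by omega)]
    | (k+2) =>
      intro j h
      rw [Tsucc, ih (k+1) (by omega) (j+1) (by omega), ih k (by omega) j (by omega),
        if_neg (by omega : ¬ j = 0), ih (k+1) (by omega) (j-1) (by omega)]

lemma keyT (m j : ℕ) : (T (m+1) j : ℤ) =
    (if m = 0 then 0 else (T (m-1) j : ℤ)) +
      ((if j = 0 then 0 else (T m (j-1) : ℤ)) + (T m (j+1) : ℤ)) := by
  match m with
  | 0 =>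
    rw [if_pos rfl, zero_add]
    match j with
    | 0 => simp [T1, T0]
    | 1 => simp [T1, T0]
    | (j+2) =>
      rw [T1, if_neg (by omega), if_neg (by omega), T0, if_neg (by omega), T0,
        if_neg (by omega)]
      simp
  | (m+1) =>
    rw [if_neg (by omega), Nat.add_sub_cancel]
    rw [Tsucc]
    by_cases hj : j = 0
    · subst hj
      simp only [if_pos rfl]
      push_cast
      ring
    · simp only [if_neg hj]
      push_cast
      ring

lemma orth : ∀ n, ∀ j : ℕ,
    (∑ k ∈ Finset.range (n+1), (-1:ℤ)^((n-k)/2) * (D n k : ℤ) * (T k j : ℤ)) = (D n j : ℤ) := by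
  intro n
  induction n with
  | zero =>
    intro j
    rw [Finset.sum_range_one]
    by_cases hj : j = 0 <;> simp [D0, T0, hj]
  | succ n ih =>
    intro j
    have expand : ∀ k, ((D (n+1) k : ℤ)) =
        (if k = 0 then 0 else (D n (k-1) : ℤ)) + (D n (k+1) : ℤ) := by
      intro k
      rw [Dsucc]
      push_cast
      by_cases hk : k = 0
      · simp [hk]
      · simp only [if_neg hk]
    calc ∑ k ∈ Finset.range (n+2), (-1:ℤ)^((n+1-k)/2) * (D (n+1) k : ℤ) * (T k j : ℤ)
        = (∑ k ∈ Finset.range (n+2), (-1:ℤ)^((n+1-k)/2) *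
            (if k = 0 then 0 else (D n (k-1) : ℤ)) * (T k j : ℤ)) +
          ∑ k ∈ Finset.range (n+2), (-1:ℤ)^((n+1-k)/2) * (D n (k+1) : ℤ) * (T k j : ℤ) := by
          rw [← Finset.sum_add_distrib]
          refine Finset.sum_congr rfl fun k _ => ?_
          rw [expand k]; ring
      _ = (∑ m ∈ Finset.range (n+1), (-1:ℤ)^((n-m)/2) * (D n m : ℤ) * (T (m+1) j : ℤ)) +
          ∑ m ∈ Finset.range (n+1), (-1:ℤ)^((n-m)/2) * (D n m : ℤ) *
            (-(if m = 0 then 0 else (T (m-1) j : ℤ))) := by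
          congr 1
          · rw [Finset.sum_range_succ']
            rw [if_pos rfl]
            simp only [mul_zero, zero_mul, add_zero]
            refine Finset.sum_congr rfl fun m _ => ?_
            rw [if_neg (by omega : ¬ m + 1 = 0)]
            have he : (n + 1 - (m+1))/2 = (n - m)/2 := by omega
            rw [he]
            simp
          · rw [Finset.sum_range_succ, Finset.sum_range_succ]
            rw [D_zero_of_lt n (n+1) (by omega), D_zero_of_lt n (n+2) (by omega)]
            simp only [Nat.cast_zero, mul_zero, zero_mul, add_zero]
            rw [Finset.sum_range_succ']
            rw [if_pos rfl]
            simp only [neg_zero, mul_zero, add_zero]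
            refine Finset.sum_congr rfl fun k hk => ?_
            rw [Finset.mem_range] at hk
            rw [if_neg (by omega : ¬ k + 1 = 0)]
            have he : (n + 1 - k)/2 = (n - (k+1))/2 + 1 := by omega
            rw [he, pow_succ]
            simp only [Nat.add_sub_cancel]
            ring
      _ = ∑ m ∈ Finset.range (n+1), (-1:ℤ)^((n-m)/2) * (D n m : ℤ) *
            ((if j = 0 then 0 else (T m (j-1) : ℤ)) + (T m (j+1) : ℤ)) := by
          rw [← Finset.sum_add_distrib]
          refine Finset.sum_congr rfl fun m _ => ?_
          have h2 := keyT m j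
          have h3 : (if j = 0 then 0 else (T m (j-1) : ℤ)) + (T m (j+1) : ℤ)
              = (T (m+1) j : ℤ) - (if m = 0 then 0 else (T (m-1) j : ℤ)) := by
            rw [h2]; ring
          rw [h3]; ring
      _ = (if j = 0 then 0 else (D n (j-1) : ℤ)) + (D n (j+1) : ℤ) := by
          by_cases hj : j = 0
          · subst hj
            simp only [reduceIte, zero_add]
            rw [← ih 1]
          · simp only [if_neg hj]
            rw [← ih (j-1), ← ih (j+1), ← Finset.sum_add_distrib]
            refine Finset.sum_congr rfl fun m _ => ?_
            ring
      _ = (D (n+1) j : ℤ) := (expand j).symm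

lemma D_formula : ∀ n k, k ≤ n → (n + k) % 2 = 0 →
    (n + 1) * D n k = (k + 1) * Nat.choose (n+1) ((n-k)/2) := by
  intro n
  induction n with
  | zero =>
    intro k hk _
    interval_cases k
    simp [D0]
  | succ n ih =>
    intro k hk hpar
    by_cases hktop : k = n + 1
    · subst hktop
      rw [D_self, Nat.sub_self]
      simp
    · have hk' : k + 1 ≤ n := by omega
      set j := (n + 1 - k) / 2 with hjdef
      have hj1 : 1 ≤ j := by omega
      have h2j : n + 1 - k = 2 * j := by omega
      have hjn : j ≤ n + 1 := by omega
      have ihA : (n+1) * (if k = 0 then 0 else D n (k-1)) = k * Nat.choose (n+1) j := by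
        by_cases hk0 : k = 0
        · simp [hk0]
        · rw [if_neg hk0]
          have h := ih (k-1) (by omega) (by omega)
          have harg : (n - (k-1))/2 = j := by omega
          have hk1 : k - 1 + 1 = k := by omega
          rw [harg, hk1] at h
          exact h
      have ihB : (n+1) * D n (k+1) = (k + 2) * Nat.choose (n+1) (j-1) := by
        have h := ih (k+1) (by omega) (by omega)
        have harg : (n - (k+1))/2 = j - 1 := by omega
        rw [harg] at h
        exact h
      obtain ⟨i, hji⟩ : ∃ i, j = i + 1 := ⟨j - 1, by omega⟩
      have habs : Nat.choose (n+1) j * j = Nat.choose (n+1) (j-1) * (n + 2 - j) := by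
        rw [hji]
        simp only [Nat.add_sub_cancel]
        have h := Nat.choose_succ_right_eq (n+1) i
        have e2 : n + 2 - (i+1) = n + 1 - i := by omega
        rw [e2]
        exact h
      have pascal : Nat.choose (n+2) j = Nat.choose (n+1) (j-1) + Nat.choose (n+1) j := by
        rw [hji]
        simp only [Nat.add_sub_cancel]
        have h := Nat.choose_succ_succ (n+1) i
        simpa using h
      apply Nat.eq_of_mul_eq_mul_left (show 0 < n+1 by omega)
      rw [Dsucc]
      have expand2 : (n+1+1) * ((n+1) * ((if k = 0 then 0 else D n (k-1)) + D n (k+1)))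
          = (n+2) * ((n+1) * (if k = 0 then 0 else D n (k-1)) + (n+1) * D n (k+1)) := by ring
      calc (n+1) * ((n+1+1) * ((if k = 0 then 0 else D n (k-1)) + D n (k+1)))
          = (n+2) * ((n+1) * (if k = 0 then 0 else D n (k-1)) + (n+1) * D n (k+1)) := by ring
        _ = (n+2) * (k * Nat.choose (n+1) j + (k+2) * Nat.choose (n+1) (j-1)) := by
            rw [ihA, ihB]
        _ = (n+1) * ((k+1) * Nat.choose (n+2) j) := by
            rw [pascal]
            zify
            have hk2 : (k:ℤ) = (n:ℤ) + 1 - 2*j := by omega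
            have habsZ : (Nat.choose (n+1) j : ℤ) * j
                = (Nat.choose (n+1) (j-1) : ℤ) * ((n:ℤ) + 2 - j) := by
              zify [show j ≤ n + 2 by omega] at habs
              exact habs
            linear_combination (-2:ℤ) * habsZ +
              ((Nat.choose (n+1) j : ℤ) + (Nat.choose (n+1) (j-1) : ℤ)) * hk2
        _ = (n+1) * ((k+1) * Nat.choose (n+1+1) j) := by norm_num

lemma dnk_eq_D (n k : ℕ) :
    (if k ≤ n ∧ (n - k) % 2 = 0 then (k + 1) * Nat.choose (n + 1) ((n - k) / 2) / (n + 1)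
      else 0) = D n k := by
  by_cases h : k ≤ n ∧ (n - k) % 2 = 0
  · rw [if_pos h]
    obtain ⟨h1, h2⟩ := h
    have h3 := D_formula n k h1 (by omega)
    rw [← h3, Nat.mul_div_cancel_left _ (by omega : 0 < n+1)]
  · rw [if_neg h]
    rcases Nat.lt_or_ge n k with hlt | hle
    · exact (D_zero_of_lt n k hlt).symm
    · have : (n + k) % 2 = 1 := by omega
      exact (D_zero_of_parity n k this).symm



/-- helper: ncard of finite disjoint biUnion -/
lemma ncard_biUnion {α β : Type*} [DecidableEq β] (F : Finset β) (A : β → Set α)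
    (hfin : ∀ k ∈ F, (A k).Finite)
    (hdisj : ∀ k ∈ F, ∀ l ∈ F, k ≠ l → Disjoint (A k) (A l)) :
    (⋃ k ∈ F, A k).ncard = ∑ k ∈ F, (A k).ncard := by
  classical
  induction F using Finset.induction_on with
  | empty => simp
  | @insert a F ha ih =>
    have hfin' : ∀ k ∈ F, (A k).Finite := fun k hk => hfin k (Finset.mem_insert_of_mem hk)
    have hU : Set.Finite (⋃ x ∈ F, A x) := Set.Finite.biUnion F.finite_toSet hfin'
    have hd : Disjoint (A a) (⋃ x ∈ F, A x) := by
      rw [Set.disjoint_iUnion_right]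
      intro k
      rw [Set.disjoint_iUnion_right]
      intro hk
      exact hdisj a (Finset.mem_insert_self a F) k (Finset.mem_insert_of_mem hk)
        (fun h => ha (h ▸ hk))
    rw [Finset.set_biUnion_insert, Finset.sum_insert ha,
      Set.ncard_union_eq hd (hfin a (Finset.mem_insert_self a F)) hU,
      ih hfin' (fun k hk l hl h => hdisj k (Finset.mem_insert_of_mem hk) l
        (Finset.mem_insert_of_mem hl) h)]

def Wset (n : ℕ) (j : ℤ) : Set (Fin n → Bool) :=
  {w | (∀ i ≤ n, 0 ≤ psum w i) ∧ psum w n = j}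

lemma psum_ge {n : ℕ} (w : Fin n → Bool) {i : ℕ} (h : n ≤ i) : psum w i = psum w n := by
  unfold psum
  refine Finset.sum_congr rfl fun j _ => ?_
  have := j.is_lt
  rw [if_pos (lt_of_lt_of_le this h), if_pos this]

lemma psum_snoc {n : ℕ} (w : Fin n → Bool) (b : Bool) (i : ℕ) :
    psum (Fin.snoc w b) i = psum w i + if n < i then stepVal b else 0 := by
  unfold psum
  rw [Fin.sum_univ_castSucc]
  simp only [Fin.snoc_castSucc, Fin.snoc_last, Fin.coe_castSucc, Fin.val_last]

lemma mem_Wset_snoc {n : ℕ} (w : Fin n → Bool) (b : Bool) (j : ℤ) :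
    Fin.snoc w b ∈ Wset (n+1) j ↔ w ∈ Wset n (j - stepVal b) ∧ 0 ≤ j := by
  constructor
  · rintro ⟨h1, h2⟩
    have hend : psum w n + stepVal b = j := by
      have := psum_snoc w b (n+1)
      rw [if_pos (Nat.lt_succ_self n), psum_ge w (Nat.le_succ n)] at this
      rw [← h2, this]
    refine ⟨⟨fun i hi => ?_, by omega⟩, ?_⟩
    · have := h1 i (le_trans hi (Nat.le_succ n))
      rwa [psum_snoc, if_neg (by omega), add_zero] at this
    · have := h1 (n+1) le_rfl
      rw [h2] at this
      exact this
  · rintro ⟨⟨h1, h2⟩, hj⟩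
    have hend : psum (Fin.snoc w b) (n+1) = j := by
      rw [psum_snoc, if_pos (Nat.lt_succ_self n), psum_ge w (Nat.le_succ n)]
      omega
    refine ⟨fun i hi => ?_, hend⟩
    rcases Nat.lt_or_ge i (n+1) with h | h
    · rw [psum_snoc, if_neg (by omega), add_zero]
      exact h1 i (by omega)
    · rw [psum_ge _ h, hend]; exact hj

lemma Wset_neg {n : ℕ} {j : ℤ} (hj : j < 0) : Wset n j = ∅ := by
  ext w
  simp only [Wset, Set.mem_setOf_eq, Set.mem_empty_iff_false, iff_false]
  rintro ⟨h1, h2⟩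
  have := h1 n le_rfl
  omega

lemma Wset_succ (n : ℕ) (j : ℤ) (hj : 0 ≤ j) :
    Wset (n+1) j = (fun w => Fin.snoc w true) '' Wset n (j-1) ∪
      (fun w => Fin.snoc w false) '' Wset n (j+1) := by
  ext w
  constructor
  · intro hw
    have hsp := Fin.snoc_init_self w
    rcases hb : w (Fin.last n) with _ | _
    · right
      rw [hb] at hsp
      refine ⟨Fin.init w, ?_, hsp⟩
      have h' : Fin.snoc (Fin.init w) false ∈ Wset (n+1) j := by rw [hsp]; exact hw
      have := (mem_Wset_snoc _ _ _).1 h'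
      simpa [stepVal] using this.1
    · left
      rw [hb] at hsp
      refine ⟨Fin.init w, ?_, hsp⟩
      have h' : Fin.snoc (Fin.init w) true ∈ Wset (n+1) j := by rw [hsp]; exact hw
      have := (mem_Wset_snoc _ _ _).1 h'
      simpa [stepVal] using this.1
  · rintro (⟨v, hv, rfl⟩ | ⟨v, hv, rfl⟩)
    · show Fin.snoc v true ∈ Wset (n+1) j
      exact (mem_Wset_snoc _ _ _).2 ⟨by simpa [stepVal] using hv, hj⟩
    · show Fin.snoc v false ∈ Wset (n+1) j
      exact (mem_Wset_snoc _ _ _).2 ⟨by simpa [stepVal] using hv, hj⟩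

lemma snoc_injective {n : ℕ} (b : Bool) :
    Function.Injective (fun w : Fin n → Bool => (Fin.snoc w b : Fin (n+1) → Bool)) := by
  intro u v h
  have := congrArg Fin.init h
  simpa [Fin.init_snoc] using this

lemma Wcard : ∀ (n : ℕ) (j : ℤ), (Wset n j).ncard = if 0 ≤ j then D n j.toNat else 0 := by
  intro n
  induction n with
  | zero =>
    intro j
    have h0 : ∀ (w : Fin 0 → Bool) (i : ℕ), psum w i = 0 := by intro w i; simp [psum]
    by_cases hj : j = 0
    · subst hj
      have he : Wset 0 0 = Set.univ := by
        ext w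
        simp [Wset, h0]
      rw [he]
      simp [Set.ncard_univ, D]
    · have he : Wset 0 j = ∅ := by
        ext w
        simp only [Wset, Set.mem_setOf_eq, Set.mem_empty_iff_false, iff_false, not_and]
        intro _
        rw [h0]
        exact fun h => hj h.symm
      rw [he, Set.ncard_empty]
      rcases lt_or_gt_of_ne hj with h | h
      · rw [if_neg (by omega)]
      · rw [if_pos (by omega)]
        have : j.toNat ≠ 0 := by omega
        simp [D, this]
  | succ n ih =>
    intro j
    rcases lt_or_ge j 0 with hj | hj
    · rw [Wset_neg hj, Set.ncard_empty, if_neg (by omega)]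
    rw [Wset_succ n j hj]
    rw [Set.ncard_union_eq ?_ ?_ ?_]
    · rw [Set.ncard_image_of_injective _ (snoc_injective true),
        Set.ncard_image_of_injective _ (snoc_injective false), ih, ih]
      rw [if_pos hj]
      by_cases h0 : j = 0
      · subst h0
        rw [if_neg (by omega : ¬ (0:ℤ) ≤ 0 - 1), if_pos (by omega : (0:ℤ) ≤ 0 + 1)]
        norm_num
        simp [D]
      · rw [if_pos (by omega), if_pos (by omega)]
        have h1 : (j - 1).toNat = j.toNat - 1 := by omega
        have h2 : (j + 1).toNat = j.toNat + 1 := by omega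
        rw [h1, h2]
        have h3 : j.toNat ≠ 0 := by omega
        simp [D, h3]
    · rw [Set.disjoint_left]
      rintro a ⟨u, _, rfl⟩ ⟨v, _, hv⟩
      have := congrFun hv (Fin.last n)
      simp [Fin.snoc_last] at this
    · exact Set.Finite.image _ (Set.toFinite _)
    · exact Set.Finite.image _ (Set.toFinite _)



instance : Fintype SStep where
  elems := {SStep.U, SStep.D, SStep.H}
  complete := by intro x; cases x <;> simp

def wsum (l : List SStep) : ℕ := (l.map SStep.width).sum
def hsum (l : List SStep) : ℤ := (l.map SStep.height).sum

def Lset (k : ℕ) (j : ℤ) : Set (List SStep) :=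
  {l | wsum l = k ∧ (∀ i : ℕ, 0 ≤ hsum (l.take i)) ∧ hsum l = j}

lemma one_le_width (a : SStep) : 1 ≤ a.width := by cases a <;> simp [SStep.width]

lemma height_le_width (a : SStep) : a.height ≤ (a.width : ℤ) := by
  cases a <;> simp [SStep.width, SStep.height]

lemma length_le_wsum (l : List SStep) : l.length ≤ wsum l := by
  induction l with
  | nil => simp [wsum]
  | cons a l ih =>
    have := one_le_width a
    simp only [wsum, List.map_cons, List.sum_cons, List.length_cons]
    simp only [wsum] at ih
    omega

lemma hsum_le_wsum (l : List SStep) : hsum l ≤ (wsum l : ℤ) := by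
  induction l with
  | nil => simp [wsum, hsum]
  | cons a l ih =>
    calc hsum (a :: l) = a.height + hsum l := by simp [hsum]
      _ ≤ (a.width : ℤ) + (wsum l : ℤ) := add_le_add (height_le_width a) ih
      _ = ((wsum (a :: l) : ℕ) : ℤ) := by simp [wsum]

lemma Lset_finite (k : ℕ) (j : ℤ) : (Lset k j).Finite := by
  apply Set.Finite.subset (List.finite_length_le SStep k)
  intro l hl
  have := length_le_wsum l
  rw [hl.1] at this
  exact this

lemma wsum_append (l : List SStep) (a : SStep) : wsum (l ++ [a]) = wsum l + a.width := by
  simp [wsum]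

lemma hsum_append (l : List SStep) (a : SStep) : hsum (l ++ [a]) = hsum l + a.height := by
  simp [hsum]

lemma prefix_concat (l : List SStep) (a : SStep) :
    (∀ i : ℕ, 0 ≤ hsum ((l ++ [a]).take i)) ↔
      (∀ i : ℕ, 0 ≤ hsum (l.take i)) ∧ 0 ≤ hsum l + a.height := by
  constructor
  · intro h
    constructor
    · intro i
      rcases Nat.le_total i l.length with hi | hi
      · have := h i
        rw [List.take_append, Nat.sub_eq_zero_of_le hi] at this
        simpa using this
      · have := h l.length
        rw [List.take_append, Nat.sub_self, List.take_length] at this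
        simp only [List.take_zero, List.append_nil] at this
        rwa [List.take_of_length_le hi]
    · have := h (l.length + 1)
      rw [List.take_of_length_le (by simp)] at this
      rwa [hsum_append] at this
  · rintro ⟨h1, h2⟩ i
    rcases le_or_gt i l.length with hi | hi
    · rw [List.take_append, Nat.sub_eq_zero_of_le hi]
      simpa using h1 i
    · rw [List.take_of_length_le (by simp only [List.length_append, List.length_singleton]; omega)]
      rwa [hsum_append]

lemma concat_mem_iff (l : List SStep) (a : SStep) (K : ℕ) (j : ℤ) (hj : 0 ≤ j) :
    l ++ [a] ∈ Lset K j ↔ wsum l + a.width = K ∧ l ∈ Lset (wsum l) (j - a.height) := by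
  constructor
  · rintro ⟨h1, h2, h3⟩
    rw [prefix_concat] at h2
    rw [wsum_append] at h1
    rw [hsum_append] at h3
    exact ⟨h1, rfl, h2.1, by omega⟩
  · rintro ⟨h1, -, h2, h3⟩
    refine ⟨by rw [wsum_append]; exact h1, ?_, by rw [hsum_append]; omega⟩
    rw [prefix_concat]
    exact ⟨h2, by omega⟩

lemma Lset_neg (k : ℕ) {j : ℤ} (hj : j < 0) : Lset k j = ∅ := by
  ext l
  simp only [Lset, Set.mem_setOf_eq, Set.mem_empty_iff_false, iff_false, not_and]
  intro _ h
  have := h l.length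
  rw [List.take_length] at this
  omega

lemma Lset_zero (j : ℤ) : Lset 0 j = if j = 0 then {([] : List SStep)} else ∅ := by
  ext l
  have hlen : l ∈ Lset 0 j → l = [] := by
    intro hl
    have h := length_le_wsum l
    rw [hl.1] at h
    exact List.length_eq_zero_iff.1 (by omega)
  by_cases hj : j = 0
  · subst hj
    simp only [if_pos rfl, Set.mem_singleton_iff]
    constructor
    · exact hlen
    · rintro rfl
      refine ⟨rfl, fun i => by simp [hsum], by simp [hsum]⟩
  · simp only [if_neg hj, Set.mem_empty_iff_false, iff_false]
    intro hl
    have h0 := hlen hl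
    subst h0
    exact hj (by simpa [hsum] using hl.2.2.symm)

lemma Lset_one (j : ℤ) (hj : 0 ≤ j) :
    Lset 1 j = (fun l => l ++ [SStep.U]) '' Lset 0 (j - 1) ∪
      (fun l => l ++ [SStep.D]) '' Lset 0 (j + 1) := by
  ext m
  constructor
  · intro hm
    rcases List.eq_nil_or_concat' m with rfl | ⟨l, a, rfl⟩
    · exact absurd hm.1 (by simp [wsum])
    · have cm := (concat_mem_iff l a 1 j hj).1 hm
      cases a
      · have hw : wsum l = 0 := by have h := cm.1; simp only [SStep.width] at h; omega
        left
        refine ⟨l, ?_, rfl⟩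
        have := cm.2; rw [hw] at this
        simpa [SStep.height] using this
      · have hw : wsum l = 0 := by have h := cm.1; simp only [SStep.width] at h; omega
        right
        refine ⟨l, ?_, rfl⟩
        have := cm.2; rw [hw] at this
        simpa [SStep.height, sub_neg_eq_add] using this
      · exfalso; have h := cm.1; simp only [SStep.width] at h; omega
  · rintro (⟨l, hl, rfl⟩ | ⟨l, hl, rfl⟩)
    · show l ++ [SStep.U] ∈ Lset 1 j
      refine (concat_mem_iff l SStep.U 1 j hj).2 ⟨by simp [SStep.width, hl.1], ?_⟩
      rw [hl.1]
      simpa [SStep.height] using hl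
    · show l ++ [SStep.D] ∈ Lset 1 j
      refine (concat_mem_iff l SStep.D 1 j hj).2 ⟨by simp [SStep.width, hl.1], ?_⟩
      rw [hl.1]
      simpa [SStep.height, sub_neg_eq_add] using hl

lemma Lset_two (k : ℕ) (j : ℤ) (hj : 0 ≤ j) :
    Lset (k+2) j = (fun l => l ++ [SStep.U]) '' Lset (k+1) (j - 1) ∪
      (fun l => l ++ [SStep.D]) '' Lset (k+1) (j + 1) ∪
      (fun l => l ++ [SStep.H]) '' Lset k j := by
  ext m
  constructor
  · intro hm
    rcases List.eq_nil_or_concat' m with rfl | ⟨l, a, rfl⟩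
    · exact absurd hm.1 (by simp [wsum])
    · have cm := (concat_mem_iff l a (k+2) j hj).1 hm
      cases a
      · have hw : wsum l = k+1 := by have h := cm.1; simp only [SStep.width] at h; omega
        left; left
        refine ⟨l, ?_, rfl⟩
        have := cm.2; rw [hw] at this
        simpa [SStep.height] using this
      · have hw : wsum l = k+1 := by have h := cm.1; simp only [SStep.width] at h; omega
        left; right
        refine ⟨l, ?_, rfl⟩
        have := cm.2; rw [hw] at this
        simpa [SStep.height, sub_neg_eq_add] using this
      · have hw : wsum l = k := by have h := cm.1; simp only [SStep.width] at h; omega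
        right
        refine ⟨l, ?_, rfl⟩
        have := cm.2; rw [hw] at this
        simpa [SStep.height] using this
  · rintro ((⟨l, hl, rfl⟩ | ⟨l, hl, rfl⟩) | ⟨l, hl, rfl⟩)
    · show l ++ [SStep.U] ∈ Lset (k+2) j
      refine (concat_mem_iff l SStep.U (k+2) j hj).2 ⟨by simp [SStep.width, hl.1], ?_⟩
      rw [hl.1]
      simpa [SStep.height] using hl
    · show l ++ [SStep.D] ∈ Lset (k+2) j
      refine (concat_mem_iff l SStep.D (k+2) j hj).2 ⟨by simp [SStep.width, hl.1], ?_⟩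
      rw [hl.1]
      simpa [SStep.height, sub_neg_eq_add] using hl
    · show l ++ [SStep.H] ∈ Lset (k+2) j
      refine (concat_mem_iff l SStep.H (k+2) j hj).2 ⟨by simp [SStep.width, hl.1], ?_⟩
      rw [hl.1]
      simpa [SStep.height] using hl

lemma append_inj (a : SStep) : Function.Injective (fun l : List SStep => l ++ [a]) :=
  List.append_left_injective [a]

lemma images_disjoint (a b : SStep) (hab : a ≠ b) (S S' : Set (List SStep)) :
    Disjoint ((fun l => l ++ [a]) '' S) ((fun l => l ++ [b]) '' S') := by
  rw [Set.disjoint_left]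
  rintro m ⟨u, _, rfl⟩ ⟨v, _, hv⟩
  have := congrArg List.getLast? hv
  simp only [List.getLast?_concat] at this
  exact hab (Option.some.inj this).symm

lemma toNat_if_sub (a kk : ℕ) :
    (if (0:ℤ) ≤ (a:ℤ) - 1 then T kk ((a:ℤ) - 1).toNat else 0) =
      if a = 0 then 0 else T kk (a - 1) := by
  by_cases h : a = 0
  · subst h; rw [if_neg (by omega), if_pos rfl]
  · rw [if_pos (by omega), if_neg h]
    congr 1
    omega

lemma toNat_if_add (a kk : ℕ) :
    (if (0:ℤ) ≤ (a:ℤ) + 1 then T kk ((a:ℤ) + 1).toNat else 0) = T kk (a + 1) := by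
  have e : ((a:ℤ) + 1).toNat = a + 1 := by omega
  rw [if_pos (by omega), e]

lemma toNat_if_self (a kk : ℕ) :
    (if (0:ℤ) ≤ (a:ℤ) then T kk ((a:ℤ)).toNat else 0) = T kk a := by
  have e : ((a:ℤ)).toNat = a := by omega
  rw [if_pos (by omega), e]

lemma Lcard : ∀ k (j : ℤ), (Lset k j).ncard = if 0 ≤ j then T k j.toNat else 0 := by
  intro k
  induction k using Nat.strong_induction_on with
  | _ k ih =>
    match k with
    | 0 =>
      intro j
      rw [Lset_zero]
      by_cases hj : j = 0
      · subst hj; simp [T0]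
      · rw [if_neg hj, Set.ncard_empty]
        rcases lt_or_gt_of_ne hj with h | h
        · rw [if_neg (by omega)]
        · rw [if_pos (by omega), T0, if_neg (by omega)]
    | 1 =>
      intro j
      rcases lt_or_ge j 0 with hj | hj
      · rw [Lset_neg _ hj, Set.ncard_empty, if_neg (by omega)]
      obtain ⟨a, rfl⟩ := Int.eq_ofNat_of_zero_le hj
      rw [Lset_one _ hj,
        Set.ncard_union_eq (images_disjoint SStep.U SStep.D (by simp) _ _)
          ((Lset_finite _ _).image _) ((Lset_finite _ _).image _),
        Set.ncard_image_of_injective _ (append_inj _),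
        Set.ncard_image_of_injective _ (append_inj _),
        ih 0 (by omega), ih 0 (by omega),
        toNat_if_sub, toNat_if_add, toNat_if_self]
      match a with
      | 0 => simp [T0, T1]
      | 1 => simp [T0, T1]
      | (a+2) => simp [T0, T1]
    | (k+2) =>
      intro j
      rcases lt_or_ge j 0 with hj | hj
      · rw [Lset_neg _ hj, Set.ncard_empty, if_neg (by omega)]
      obtain ⟨a, rfl⟩ := Int.eq_ofNat_of_zero_le hj
      have hdisj : Disjoint
          ((fun l => l ++ [SStep.U]) '' Lset (k+1) ((a:ℤ) - 1) ∪
            (fun l => l ++ [SStep.D]) '' Lset (k+1) ((a:ℤ) + 1))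
          ((fun l => l ++ [SStep.H]) '' Lset k (a:ℤ)) := by
        rw [Set.disjoint_union_left]
        exact ⟨images_disjoint SStep.U SStep.H (by simp) _ _,
          images_disjoint SStep.D SStep.H (by simp) _ _⟩
      rw [Lset_two k _ hj,
        Set.ncard_union_eq hdisj
          (((Lset_finite _ _).image _).union ((Lset_finite _ _).image _))
          ((Lset_finite _ _).image _),
        Set.ncard_union_eq (images_disjoint SStep.U SStep.D (by simp) _ _)
          ((Lset_finite _ _).image _) ((Lset_finite _ _).image _),
        Set.ncard_image_of_injective _ (append_inj _),
        Set.ncard_image_of_injective _ (append_inj _),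
        Set.ncard_image_of_injective _ (append_inj _),
        ih (k+1) (by omega), ih (k+1) (by omega), ih k (by omega),
        toNat_if_sub, toNat_if_add, toNat_if_self, toNat_if_self, Tsucc]

-- real part 4 starts here

lemma psum_le {n : ℕ} (w : Fin n → Bool) : psum w n ≤ n := by
  unfold psum
  calc (∑ j : Fin n, if (j : ℕ) < n then stepVal (w j) else 0)
      ≤ ∑ _j : Fin n, (1:ℤ) := by
        apply Finset.sum_le_sum
        intro j _
        by_cases h : (j:ℕ) < n
        · rw [if_pos h]; unfold stepVal; split <;> omega
        · rw [if_neg h]; omega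
    _ = n := by simp

lemma d_eq (n : ℕ) : d n = ∑ k ∈ Finset.range (n+1), D n k := by
  have hA : {w : Fin n → Bool | ∀ i ≤ n, 0 ≤ psum w i}
      = ⋃ k ∈ Finset.range (n+1), Wset n (k : ℤ) := by
    ext w
    simp only [Set.mem_setOf_eq, Set.mem_iUnion, Finset.mem_range, exists_prop]
    constructor
    · intro h
      have h0 : 0 ≤ psum w n := h n le_rfl
      have h1 : psum w n ≤ n := psum_le w
      exact ⟨(psum w n).toNat, by omega, h, by omega⟩
    · rintro ⟨k, hk, hw⟩
      exact hw.1
  rw [d, hA, ncard_biUnion]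
  · refine Finset.sum_congr rfl fun k _ => ?_
    have e : ((k:ℤ)).toNat = k := by omega
    rw [Wcard, if_pos (by omega : (0:ℤ) ≤ (k:ℤ)), e]
  · intro k _
    exact Set.toFinite _
  · intro k _ l _ hkl
    rw [Set.disjoint_left]
    rintro w ⟨_, h2⟩ ⟨_, h4⟩
    exact hkl (by omega)

lemma s_eq (k : ℕ) : s k = ∑ j ∈ Finset.range (k+1), T k j := by
  have hB : {l : List SStep | (l.map SStep.width).sum = k ∧
      ∀ i : ℕ, 0 ≤ ((l.take i).map SStep.height).sum}
      = ⋃ j ∈ Finset.range (k+1), Lset k (j : ℤ) := by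
    ext l
    simp only [Set.mem_setOf_eq, Set.mem_iUnion, Finset.mem_range, exists_prop]
    constructor
    · rintro ⟨h1, h2⟩
      have h0 : 0 ≤ hsum l := by
        have := h2 l.length
        rwa [List.take_length] at this
      have hle : hsum l ≤ (k : ℤ) := by
        have := hsum_le_wsum l
        rwa [show wsum l = k from h1] at this
      exact ⟨(hsum l).toNat, by omega, h1, h2, by omega⟩
    · rintro ⟨j, hj, hl⟩
      exact ⟨hl.1, hl.2.1⟩
  rw [s, hB, ncard_biUnion]
  · refine Finset.sum_congr rfl fun j _ => ?_
    have e : ((j:ℤ)).toNat = j := by omega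
    rw [Lcard, if_pos (by omega : (0:ℤ) ≤ (j:ℤ)), e]
  · intro j _
    exact Lset_finite _ _
  · intro j _ i _ hji
    rw [Set.disjoint_left]
    rintro l ⟨_, _, h3⟩ ⟨_, _, h6⟩
    exact hji (by omega)


end Thm34

/-- **Theorem 3.4.** `d_n = ∑_{k=0}^n (-1)^{(n-k)/2} d_{n,k} s_k`, the summand being `0`
when `n-k` is odd (since then `d_{n,k} = 0`). -/
theorem dyck_eq_alternating_sum_schroeder (n : ℕ) :
    (d n : ℤ) = ∑ k ∈ Finset.range (n + 1),
      (-1 : ℤ) ^ ((n - k) / 2) * dnk n k * s k := by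
  have hdnk : ∀ k, (dnk n k : ℤ) = (Thm34.D n k : ℤ) := by
    intro k
    rw [dnk, Thm34.dnk_eq_D]
  calc (d n : ℤ) = ((∑ k ∈ Finset.range (n+1), Thm34.D n k : ℕ) : ℤ) := by rw [Thm34.d_eq]
    _ = ∑ j ∈ Finset.range (n+1), (Thm34.D n j : ℤ) := by push_cast; ring
    _ = ∑ j ∈ Finset.range (n+1), ∑ k ∈ Finset.range (n+1),
          (-1:ℤ)^((n-k)/2) * (Thm34.D n k : ℤ) * (Thm34.T k j : ℤ) := by
        refine Finset.sum_congr rfl fun j _ => ?_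
        rw [Thm34.orth n j]
    _ = ∑ k ∈ Finset.range (n+1), ∑ j ∈ Finset.range (n+1),
          (-1:ℤ)^((n-k)/2) * (Thm34.D n k : ℤ) * (Thm34.T k j : ℤ) := Finset.sum_comm
    _ = ∑ k ∈ Finset.range (n+1),
          (-1:ℤ)^((n-k)/2) * (Thm34.D n k : ℤ) * ∑ j ∈ Finset.range (n+1), (Thm34.T k j : ℤ) := by
        refine Finset.sum_congr rfl fun k _ => ?_
        rw [Finset.mul_sum]
    _ = ∑ k ∈ Finset.range (n+1),
          (-1:ℤ)^((n-k)/2) * (Thm34.D n k : ℤ) * ∑ j ∈ Finset.range (k+1), (Thm34.T k j : ℤ) := by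
        refine Finset.sum_congr rfl fun k hk => ?_
        rw [Finset.mem_range] at hk
        congr 1
        rw [Finset.sum_subset (Finset.range_subset_range.2 (by omega : k + 1 ≤ n + 1))]
        intro j _ hj
        rw [Finset.mem_range, not_lt] at hj
        rw [Thm34.T_zero_of_lt k j (by omega)]
        norm_num
    _ = ∑ k ∈ Finset.range (n+1), (-1:ℤ)^((n-k)/2) * (dnk n k : ℤ) * (s k : ℤ) := by
        refine Finset.sum_congr rfl fun k _ => ?_
        rw [hdnk, Thm34.s_eq]
        push_cast
        ring
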